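/- Let G be an n-vertex totally ordered graph, let S be a set of s vertices of G with s ≤ n − 2, let G' = G − S (inheriting the vertex and edge orders), let A be the array obtained from the height table of G by deleting the columns indexed by vertices of S, and let A' be the height table of G'. Index the cells of A and A' by Z = {1,2,3,…} × V(G'), ordered so that (i,u) ≤ (i',v) iff i < i', or i = i' and u ≤ v in the vertex order of G'. Then there exists a family of arrays {A_β : β ∈ Z}, each with cells indexed by Z, where each cell is empty, contains an edge of G', or contains a hole, each edge of G' appears in exactly one cell of each A_β, the initial array (indexed by the minimum element of Z) has at most s holes in each column, and for each β ∈ Z: (1) if δ < β then A_β(δ) = A'(δ); (2) if δ ≥ β and A_β(δ) is not a hole then A_β(δ) = A(δ); (3) if γ is the successor of β = (i,u) in Z, then A_γ is obtained from A_β by swapping A_β(β) with A_β(δ) for some δ in the critical interval of A_β, and moreover if β and δ lie in distinct columns u and v then A_β(δ) is the edge uv. Here the critical interval of A_β, for β = (i,u), is the interval [(i,u),(j,u)] where j is the least integer with j ≥ i such that A_β(j,u) does not contain a hole. -/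

import Mathlib

/-!
Walk through the cells `β = (i, u)` of `Z` in increasing order, keeping an array that agrees
with `A'` before `β` and, up to holes, with `A` from `β` on; it starts as `A` with the edges
that meet `S` turned into holes. At `β` the entry `A'(β)` is brought in by one swap. If
`A'(β) = e`, the cell `δ` holding `e` lies at or after `β`, and a non-hole cell of column `u`
between `β` and `δ` would hold an `A`-edge larger than `e` (as `e` was still free when that
cell was filled in `G`) and at most `e` (as `e` is the greedy choice at `β` in `G'`). So these
cells are holes, `δ` lies in the critical interval, and if `δ` is in another column `v`, then
`e` meets both `u` and `v`, so `e = uv`. If `A'(β)` is empty, the first non-hole cell of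
column `u` from `β` on is empty for the same reason, and it is the one swapped in.
-/

open scoped Classical

namespace AltitudePaper

variable {V : Type*} [Fintype V]

/-- The list of cells `(i, u)` (row `i`, column `u`), rows `1..N`, in the order
they are filled: by row, then by the vertex (column) order. -/
noncomputable def cellList (ov : LinearOrder V) (N : ℕ) : List (ℕ × V) :=
  letI := ov
  (List.range N).flatMap fun i => ((Finset.univ : Finset V).sort (· ≤ ·)).map fun u => (i + 1, u)

/-- The largest (in the edge order `oe`) edge of `G` incident to `u` not among `used`. -/
noncomputable def pick (G : SimpleGraph V) (oe : LinearOrder (Sym2 V)) (u : V)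
    (used : Finset (Sym2 V)) : Option (Sym2 V) :=
  letI := oe
  ((Finset.univ : Finset (Sym2 V)).filter fun e => e ∈ G.edgeSet ∧ u ∈ e ∧ e ∉ used).max

/-- Fill the given list of cells in order, greedily placing at each cell `(i,u)` the
largest unused edge incident to `u`. -/
noncomputable def tableAux (G : SimpleGraph V) (oe : LinearOrder (Sym2 V)) :
    List (ℕ × V) → Finset (Sym2 V) → (ℕ × V) → Option (Sym2 V)
  | [], _, _ => none
  | c :: rest, used, β =>
    match pick G oe c.2 used with
    | none => if β = c then none else tableAux G oe rest used β
    | some e => if β = c then some e else tableAux G oe rest (insert e used) β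

/-- The height table of the totally ordered graph `(G, ov, oe)`:  cells `(i,u)` with
`i` a positive integer (row) and `u` a vertex (column) are filled in order (by row,
then by column order), each cell receiving the largest edge incident to its column
not appearing in an earlier cell (and left empty if there is none). -/
noncomputable def heightTable (G : SimpleGraph V) (ov : LinearOrder V)
    (oe : LinearOrder (Sym2 V)) : ℕ × V → Option (Sym2 V) :=
  tableAux G oe (cellList ov (Fintype.card (Sym2 V))) ∅

/-- The height `h_G(e)` of an edge `e`: the index of the row of the height table
containing `e`. -/
noncomputable def edgeHeight (G : SimpleGraph V) (ov : LinearOrder V)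
    (oe : LinearOrder (Sym2 V)) (e : Sym2 V) : ℕ :=
  sSup {i | ∃ u, heightTable G ov oe (i, u) = some e}

/-- A monotone path in the edge-ordered graph `(G, oe)`: a path traversing its
edges in increasing order of the edge ordering. -/
def IsMonotonePath (G : SimpleGraph V) (oe : LinearOrder (Sym2 V)) {u v : V}
    (p : G.Walk u v) : Prop :=
  p.IsPath ∧ List.Chain' (fun e f => oe.lt e f) p.edges

/-- The height of a (nontrivial) monotone path: the height of its last edge. -/
noncomputable def pathHeight (G : SimpleGraph V) (ov : LinearOrder V)
    (oe : LinearOrder (Sym2 V)) {u v : V} (p : G.Walk u v) : ℕ :=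
  (p.edges.getLast?.map (edgeHeight G ov oe)).getD 0


/-- The graph `G − S`: delete the vertices of `S` (and all incident edges).  It is
realized on the same vertex type, with the vertices of `S` made isolated; its height
table therefore agrees, on columns outside `S`, with the height table of the induced
graph on `V ∖ S` with the inherited vertex and edge orders. -/
def delVerts (G : SimpleGraph V) (S : Set V) : SimpleGraph V where
  Adj a b := G.Adj a b ∧ a ∉ S ∧ b ∉ S
  symm := by constructor; intro a b h; exact ⟨h.1.symm, h.2.2, h.2.1⟩
  loopless := by constructor; intro a h; exact G.loopless.irrefl a h.1

/-- The contents of a cell of one of the arrays `A_β`: empty, an edge, or a hole. -/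
inductive Cell (V : Type*) where
  | empty : Cell V
  | edge : Sym2 V → Cell V
  | hole : Cell V

/-- View a height-table entry as a cell (no holes). -/
def ofOpt : Option (Sym2 V) → Cell V
  | none => Cell.empty
  | some e => Cell.edge e

/-- The strict order on the index set `Z = {1,2,…} × V(G′)` of cells:
`(i,u) < (i',v)` iff `i < i'`, or `i = i'` and `u` precedes `v` in the vertex
order. -/
def zLT (ov : LinearOrder V) {S : Set V} (a b : ℕ × {u : V // u ∉ S}) : Prop :=
  a.1 < b.1 ∨ (a.1 = b.1 ∧ ov.lt a.2.val b.2.val)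

/-- The (non-strict) order on `Z`. -/
def zLE (ov : LinearOrder V) {S : Set V} (a b : ℕ × {u : V // u ∉ S}) : Prop :=
  zLT ov a b ∨ a = b

/-- `γ` is the successor of `β` in `Z`. -/
def IsSuccZ (ov : LinearOrder V) {S : Set V} (β γ : ℕ × {u : V // u ∉ S}) : Prop :=
  zLT ov β γ ∧ ∀ δ, zLT ov β δ → zLE ov γ δ

/-- `j` is the row index of the top of the critical interval `[(i,u),(j,u)]` of the
array `Af β` at `β = (i,u)`: the least `j ≥ i` such that the cell `(j, u)` does not
contain a hole. -/
def IsCritBound {S : Set V} (Af : (ℕ × {u : V // u ∉ S}) → (ℕ × {u : V // u ∉ S}) → Cell V)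
    (β : ℕ × {u : V // u ∉ S}) (j : ℕ) : Prop :=
  β.1 ≤ j ∧ Af β (j, β.2) ≠ Cell.hole ∧
    ∀ j', β.1 ≤ j' → j' < j → Af β (j', β.2) = Cell.hole


section Greedy

variable {V : Type*} [Fintype V] (G : SimpleGraph V) (oe : LinearOrder (Sym2 V))

lemma pick_spec {u : V} {used : Finset (Sym2 V)} {e : Sym2 V}
    (h : pick G oe u used = some e) : e ∈ G.edgeSet ∧ u ∈ e ∧ e ∉ used := by
  let := oe
  simpa using Finset.mem_of_max h

lemma exists_pick_ge {u : V} {used : Finset (Sym2 V)} {e : Sym2 V}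
    (he : e ∈ G.edgeSet) (hu : u ∈ e) (hused : e ∉ used) :
    ∃ g, pick G oe u used = some g ∧ oe.le e g := by
  let := oe
  have hmem : e ∈ Finset.univ.filter fun e => e ∈ G.edgeSet ∧ u ∈ e ∧ e ∉ used := by
    simp [he, hu, hused]
  obtain ⟨g, hg⟩ := Finset.max_of_mem hmem
  exact ⟨g, hg, by exact_mod_cast hg ▸ Finset.le_max hmem⟩

lemma tableAux_cons (c : ℕ × V) (rest : List (ℕ × V)) (used : Finset (Sym2 V)) (β : ℕ × V) :
    tableAux G oe (c :: rest) used β =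
      if β = c then pick G oe c.2 used
      else tableAux G oe rest ((pick G oe c.2 used).elim used (insert · used)) β := by
  simp only [tableAux]
  cases pick G oe c.2 used <;> split_ifs <;> rfl

lemma tableAux_of_not_mem {L : List (ℕ × V)} {used : Finset (Sym2 V)} {β : ℕ × V}
    (h : β ∉ L) : tableAux G oe L used β = none := by
  induction L generalizing used with
  | nil => rfl
  | cons c rest ih =>
    rw [List.mem_cons, not_or] at h
    rw [tableAux_cons, if_neg h.1, ih h.2]

lemma tableAux_spec {L : List (ℕ × V)} {used : Finset (Sym2 V)} {β : ℕ × V} {e : Sym2 V}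
    (h : tableAux G oe L used β = some e) : e ∈ G.edgeSet ∧ β.2 ∈ e ∧ e ∉ used := by
  induction L generalizing used with
  | nil => cases h
  | cons c rest ih =>
    rw [tableAux_cons] at h
    split_ifs at h with hc
    · exact hc ▸ pick_spec G oe h
    · obtain ⟨he, hβ, hused⟩ := ih h
      refine ⟨he, hβ, fun hmem => hused ?_⟩
      cases pick G oe c.2 used
      · exact hmem
      · exact Finset.mem_insert_of_mem hmem

lemma eq_of_tableAux_eq {L : List (ℕ × V)} {used : Finset (Sym2 V)} {β β' : ℕ × V}
    {e : Sym2 V} (h : tableAux G oe L used β = some e) (h' : tableAux G oe L used β' = some e) :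
    β = β' := by
  induction L generalizing used with
  | nil => cases h
  | cons c rest ih =>
    rw [tableAux_cons] at h h'
    split_ifs at h h' with hc hc' hc'
    · exact hc.trans hc'.symm
    · rw [h] at h'
      exact absurd (Finset.mem_insert_self e used) (tableAux_spec G oe h').2.2
    · rw [h'] at h
      exact absurd (Finset.mem_insert_self e used) (tableAux_spec G oe h).2.2
    · exact ih h h'

lemma exists_tableAux_ge {R : (ℕ × V) → (ℕ × V) → Prop} (hR : ∀ c, ¬ R c c)
    {L : List (ℕ × V)} (hL : L.Pairwise R) {used : Finset (Sym2 V)} {β : ℕ × V} {e : Sym2 V}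
    (hβ : β ∈ L) (he : e ∈ G.edgeSet) (hu : β.2 ∈ e) (hused : e ∉ used)
    (hbefore : ∀ c ∈ L, R c β → tableAux G oe L used c ≠ some e) :
    ∃ g, tableAux G oe L used β = some g ∧ oe.le e g := by
  induction L generalizing used with
  | nil => cases hβ
  | cons c rest ih =>
    rw [List.pairwise_cons] at hL
    rcases List.mem_cons.mp hβ with rfl | hβ
    · simpa [tableAux_cons] using exists_pick_ge G oe he hu hused
    have hc : ∀ c' ∈ rest, c' ≠ c := fun c' hc' h => hR c (h ▸ hL.1 c' hc')
    simp only [tableAux_cons, if_neg (hc β hβ)]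
    refine ih hL.2 hβ ?_ fun c' hc' hR' => ?_
    · cases hp : pick G oe c.2 used with
      | none => exact hused
      | some e₀ =>
        have hne : e ≠ e₀ := fun h => hbefore c List.mem_cons_self (hL.1 β hβ)
          (by rw [tableAux_cons, if_pos rfl, hp, h])
        simpa [hne] using hused
    · have := hbefore c' (List.mem_cons_of_mem _ hc') hR'
      rwa [tableAux_cons, if_neg (hc c' hc')] at this

end Greedy

def cellLT {V : Type*} (ov : LinearOrder V) (a b : ℕ × V) : Prop :=
  a.1 < b.1 ∨ (a.1 = b.1 ∧ ov.lt a.2 b.2)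

section CellOrder

variable {V : Type*} (ov : LinearOrder V)

lemma cellLT_irrefl (c : ℕ × V) : ¬ cellLT ov c c := by
  let := ov
  rintro (h | ⟨-, h⟩) <;> exact lt_irrefl _ h

lemma cellLT_trans {a b c : ℕ × V} (hab : cellLT ov a b) (hbc : cellLT ov b c) :
    cellLT ov a c := by
  let := ov
  rcases hab with hab | ⟨hab₁, hab₂⟩ <;> rcases hbc with hbc | ⟨hbc₁, hbc₂⟩
  · exact Or.inl (hab.trans hbc)
  · exact Or.inl (hbc₁ ▸ hab)
  · exact Or.inl (hab₁ ▸ hbc)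
  · exact Or.inr ⟨hab₁.trans hbc₁, hab₂.trans hbc₂⟩

variable [Fintype V]

lemma mem_cellList {N : ℕ} {β : ℕ × V} : β ∈ cellList ov N ↔ 1 ≤ β.1 ∧ β.1 ≤ N := by
  let := ov
  simp only [cellList, List.mem_flatMap, List.mem_map, List.mem_range, Finset.mem_sort,
    Finset.mem_univ, true_and]
  constructor
  · rintro ⟨i, hi, u, rfl⟩
    exact ⟨Nat.succ_pos i, hi⟩
  · rintro ⟨h1, h2⟩
    exact ⟨β.1 - 1, by omega, β.2, Prod.ext (by simp; omega) rfl⟩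

lemma pairwise_cellList (N : ℕ) : (cellList ov N).Pairwise (cellLT ov) := by
  let := ov
  refine List.pairwise_flatMap.mpr ⟨fun i _ => ?_, List.pairwise_lt_range.imp ?_⟩
  · exact List.pairwise_map.mpr <|
      (Finset.sortedLT_sort Finset.univ).pairwise.imp fun h => Or.inr ⟨rfl, h⟩
  · intro i j hij x hx y hy
    simp only [List.mem_map] at hx hy
    obtain ⟨u, -, rfl⟩ := hx
    obtain ⟨v, -, rfl⟩ := hy
    exact Or.inl (by simpa using hij)

end CellOrder

section HeightTable

variable {V : Type*} [Fintype V] (G : SimpleGraph V) (ov : LinearOrder V)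
  (oe : LinearOrder (Sym2 V))

lemma heightTable_spec {β : ℕ × V} {e : Sym2 V} (h : heightTable G ov oe β = some e) :
    e ∈ G.edgeSet ∧ β.2 ∈ e :=
  (tableAux_spec G oe h).imp_right And.left

lemma heightTable_row {β : ℕ × V} {e : Sym2 V} (h : heightTable G ov oe β = some e) :
    1 ≤ β.1 ∧ β.1 ≤ Fintype.card (Sym2 V) := by
  rw [← mem_cellList ov]
  by_contra hβ
  rw [heightTable, tableAux_of_not_mem G oe hβ] at h
  cases h

lemma eq_of_heightTable_eq {β β' : ℕ × V} {e : Sym2 V} (h : heightTable G ov oe β = some e)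
    (h' : heightTable G ov oe β' = some e) : β = β' :=
  eq_of_tableAux_eq G oe h h'

lemma exists_heightTable_ge_of_mem {β : ℕ × V} {e : Sym2 V}
    (hβ : β ∈ cellList ov (Fintype.card (Sym2 V))) (he : e ∈ G.edgeSet) (hu : β.2 ∈ e)
    (hbefore : ∀ c, cellLT ov c β → heightTable G ov oe c ≠ some e) :
    ∃ g, heightTable G ov oe β = some g ∧ oe.le e g :=
  exists_tableAux_ge G oe (cellLT_irrefl ov) (pairwise_cellList ov _) hβ he hu
    (Finset.notMem_empty e) fun c _ => hbefore c

/-- Otherwise each of the `|Sym2 V|` cells of a column at an end of `e` would receive a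
different edge other than `e`. -/
lemma exists_heightTable_eq {e : Sym2 V} (he : e ∈ G.edgeSet) :
    ∃ β, heightTable G ov oe β = some e := by
  by_contra hnone
  push Not at hnone
  have hcol : ∀ k : Fin (Fintype.card (Sym2 V)),
      ∃ g, heightTable G ov oe (k + 1, e.out.1) = some g := fun k =>
    (exists_heightTable_ge_of_mem G ov oe (β := (k + 1, e.out.1))
      ((mem_cellList ov).2 ⟨Nat.succ_pos _, k.2⟩) he
      (Sym2.out_fst_mem e) fun c _ => hnone c).imp fun _ h => h.1
  choose f hf using hcol
  have hf_inj : f.Injective := fun k k' h => by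
    have := eq_of_heightTable_eq G ov oe (hf k) ((hf k').trans (congrArg some h.symm))
    simpa [Fin.ext_iff] using this
  obtain ⟨k, hk⟩ := ((Fintype.bijective_iff_injective_and_card f).2 ⟨hf_inj, by simp⟩).2 e
  exact hnone _ (hk ▸ hf k)

lemma exists_heightTable_ge {β : ℕ × V} {e : Sym2 V} (hβ : 1 ≤ β.1) (he : e ∈ G.edgeSet)
    (hu : β.2 ∈ e) (hbefore : ∀ c, cellLT ov c β → heightTable G ov oe c ≠ some e) :
    ∃ g, heightTable G ov oe β = some g ∧ oe.le e g := by
  refine exists_heightTable_ge_of_mem G ov oe ((mem_cellList ov).2 ⟨hβ, ?_⟩) he hu hbefore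
  obtain ⟨c, hc⟩ := exists_heightTable_eq G ov oe he
  by_contra hlt
  exact hbefore c (Or.inl (by have := (heightTable_row G ov oe hc).2; omega)) hc

lemma exists_heightTable_gt {β β' : ℕ × V} {e : Sym2 V} (hβ : 1 ≤ β.1) (hlt : cellLT ov β β')
    (h' : heightTable G ov oe β' = some e) (hu : β.2 ∈ e) :
    ∃ f, heightTable G ov oe β = some f ∧ oe.lt e f := by
  obtain ⟨f, hf, hle⟩ := exists_heightTable_ge G ov oe hβ (heightTable_spec G ov oe h').1 hu
    fun c hc hce => by
      obtain rfl := eq_of_heightTable_eq G ov oe hce h'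
      exact cellLT_irrefl ov c (cellLT_trans ov hc hlt)
  -- `Sym2 V` carries its own partial order, so the one of `oe` is passed explicitly.
  refine ⟨f, hf, @lt_of_le_of_ne _ oe.toPartialOrder _ _ hle fun hef => ?_⟩
  exact cellLT_irrefl ov β (eq_of_heightTable_eq G ov oe (hef ▸ hf) h' ▸ hlt)

end HeightTable

section DeleteVertices

variable {V : Type*} (G : SimpleGraph V) (S : Set V)

lemma mem_edgeSet_delVerts {e : Sym2 V} :
    e ∈ (delVerts G S).edgeSet ↔ e ∈ G.edgeSet ∧ ∀ u ∈ e, u ∉ S := by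
  induction e using Sym2.ind with
  | _ x y => simp [delVerts]

lemma heightTable_delVerts_of_mem [Fintype V] (ov : LinearOrder V) (oe : LinearOrder (Sym2 V))
    {i : ℕ} {u : V} (hu : u ∈ S) : heightTable (delVerts G S) ov oe (i, u) = none := by
  cases h : heightTable (delVerts G S) ov oe (i, u) with
  | none => rfl
  | some e =>
    obtain ⟨he, hue⟩ := heightTable_spec _ ov oe h
    exact absurd hu ((mem_edgeSet_delVerts G S).1 he |>.2 u hue)

end DeleteVertices

abbrev Cells {V : Type*} (S : Set V) := ℕ × {u : V // u ∉ S}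

section Indexing

variable {V : Type*} (ov : LinearOrder V) {S : Set V}

lemma cells_eq_of_val_eq {a b : Cells S} (h : ((a.1, a.2.1) : ℕ × V) = (b.1, b.2.1)) :
    a = b := by
  rw [Prod.mk.injEq] at h
  exact Prod.ext h.1 (Subtype.ext h.2)

lemma cellLT_of_zLT {a b : Cells S} (h : zLT ov a b) : cellLT ov (a.1, a.2.1) (b.1, b.2.1) := h

lemma zLT_irrefl (a : Cells S) : ¬ zLT ov a a := cellLT_irrefl ov (a.1, a.2.1)

lemma zLT_trichotomy (a b : Cells S) : zLT ov a b ∨ a = b ∨ zLT ov b a := by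
  let := ov
  rcases lt_trichotomy a.1 b.1 with h | h | h
  · exact Or.inl (Or.inl h)
  · rcases lt_trichotomy a.2.1 b.2.1 with h' | h' | h'
    · exact Or.inl (Or.inr ⟨h, h'⟩)
    · exact Or.inr (Or.inl (Prod.ext h (Subtype.ext h')))
    · exact Or.inr (Or.inr (Or.inr ⟨h.symm, h'⟩))
  · exact Or.inr (Or.inr (Or.inl h))

lemma row_le_of_zLE {a b : Cells S} (h : zLE ov a b) : a.1 ≤ b.1 := by
  rcases h with (h | ⟨h, -⟩) | rfl
  · exact h.le
  · exact h.le
  · exact le_rfl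

lemma zLE_of_row_le {β : Cells S} {j : ℕ} (h : β.1 ≤ j) : zLE ov β (j, β.2) := by
  rcases h.lt_or_eq with h | rfl
  · exact Or.inl (Or.inl h)
  · exact Or.inr rfl

variable [Fintype V] (S)

noncomputable def colRank (u : {u : V // u ∉ S}) : ℕ :=
  letI := ov
  (monoEquivOfFin {u : V // u ∉ S} rfl).symm u

/-- The position of a cell in the enumeration of `Z` in increasing order, counted from `0`. -/
noncomputable def zidx (β : Cells S) : ℕ :=
  Fintype.card {u : V // u ∉ S} * β.1 + colRank ov S β.2

noncomputable def cellAt [Nonempty {u : V // u ∉ S}] (k : ℕ) : Cells S :=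
  letI := ov
  (k / Fintype.card {u : V // u ∉ S},
    monoEquivOfFin {u : V // u ∉ S} rfl ⟨k % _, Nat.mod_lt _ Fintype.card_pos⟩)

variable {S}

lemma colRank_lt_card (u : {u : V // u ∉ S}) : colRank ov S u < Fintype.card {u : V // u ∉ S} :=
  Fin.isLt _

lemma colRank_lt_colRank {a b : {u : V // u ∉ S}} (h : ov.lt a.1 b.1) :
    colRank ov S a < colRank ov S b := by
  let := ov
  exact (monoEquivOfFin {u : V // u ∉ S} rfl).symm.lt_iff_lt.2 h

lemma zidx_lt_zidx {a b : Cells S} (h : zLT ov a b) : zidx ov S a < zidx ov S b := by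
  have ha := colRank_lt_card ov a.2
  unfold zidx
  rcases h with h | ⟨h, h'⟩
  · have := Nat.mul_le_mul_left (Fintype.card {u : V // u ∉ S}) (Nat.succ_le_of_lt h)
    rw [Nat.mul_succ] at this
    omega
  · rw [h]
    exact Nat.add_lt_add_left (colRank_lt_colRank ov h') _

lemma zLT_iff_zidx_lt {a b : Cells S} : zLT ov a b ↔ zidx ov S a < zidx ov S b := by
  refine ⟨zidx_lt_zidx ov, fun h => ?_⟩
  rcases zLT_trichotomy ov a b with hab | rfl | hba
  · exact hab
  · exact absurd h (lt_irrefl _)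
  · exact absurd (zidx_lt_zidx ov hba) h.not_gt

lemma zidx_injective : Function.Injective (zidx ov S) := by
  intro a b h
  rcases zLT_trichotomy ov a b with hab | hab | hba
  · exact absurd h (zidx_lt_zidx ov hab).ne
  · exact hab
  · exact absurd h (zidx_lt_zidx ov hba).ne'

lemma zLE_iff_zidx_le {a b : Cells S} : zLE ov a b ↔ zidx ov S a ≤ zidx ov S b := by
  rw [zLE, zLT_iff_zidx_lt, le_iff_lt_or_eq, (zidx_injective ov).eq_iff]

lemma zidx_cellAt [Nonempty {u : V // u ∉ S}] (k : ℕ) : zidx ov S (cellAt ov S k) = k := by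
  simp only [zidx, cellAt, colRank, OrderIso.symm_apply_apply]
  exact Nat.div_add_mod k _

lemma cellAt_zidx [Nonempty {u : V // u ∉ S}] (β : Cells S) : cellAt ov S (zidx ov S β) = β :=
  zidx_injective ov (zidx_cellAt ov _)

lemma zidx_of_isSuccZ {β γ : Cells S} (h : IsSuccZ ov β γ) : zidx ov S γ = zidx ov S β + 1 := by
  have : Nonempty {u : V // u ∉ S} := ⟨β.2⟩
  have hle := (zLE_iff_zidx_le ov).1 <| h.2 (cellAt ov S (zidx ov S β + 1))
    ((zLT_iff_zidx_lt ov).2 (by rw [zidx_cellAt]; omega))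
  have hlt := zidx_lt_zidx ov h.1
  rw [zidx_cellAt] at hle
  omega

lemma zidx_eq_zero_of_forall_zLE {α : Cells S} (h : ∀ δ, zLE ov α δ) : zidx ov S α = 0 := by
  have : Nonempty {u : V // u ∉ S} := ⟨α.2⟩
  simpa [zidx_cellAt] using (zLE_iff_zidx_le ov).1 (h (cellAt ov S 0))

end Indexing

section CriticalInterval

variable {V : Type*} {S : Set V}

noncomputable def critBound (B : Cells S → Cell V) (β : Cells S) : ℕ :=
  sInf {j | β.1 ≤ j ∧ B (j, β.2) ≠ Cell.hole}

variable {B : Cells S → Cell V} {β : Cells S}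

lemma critBound_spec (hB : {δ | B δ = Cell.hole}.Finite) :
    β.1 ≤ critBound B β ∧ B (critBound B β, β.2) ≠ Cell.hole := by
  have hcol : {j | B (j, β.2) = Cell.hole}.Finite :=
    hB.preimage fun _ _ _ _ h => congrArg Prod.fst h
  exact Nat.sInf_mem ((Set.Ici_infinite β.1).sdiff hcol).nonempty

lemma critBound_le {j : ℕ} (hj : β.1 ≤ j) (hB : B (j, β.2) ≠ Cell.hole) : critBound B β ≤ j :=
  Nat.sInf_le ⟨hj, hB⟩

lemma hole_of_lt_critBound {j : ℕ} (hj : β.1 ≤ j) (hlt : j < critBound B β) :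
    B (j, β.2) = Cell.hole :=
  by_contra fun h => (critBound_le hj h).not_gt hlt

lemma isCritBound_critBound {Af : Cells S → Cells S → Cell V}
    (h : {δ | Af β δ = Cell.hole}.Finite) : IsCritBound Af β (critBound (Af β) β) :=
  ⟨(critBound_spec h).1, (critBound_spec h).2, fun _ => hole_of_lt_critBound⟩

end CriticalInterval

lemma ofOpt_ne_hole {V : Type*} (o : Option (Sym2 V)) : ofOpt o ≠ Cell.hole := by
  cases o <;> simp [ofOpt]

lemma ofOpt_eq_edge_iff {V : Type*} {o : Option (Sym2 V)} {e : Sym2 V} :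
    ofOpt o = Cell.edge e ↔ o = some e := by
  cases o <;> simp [ofOpt]

section Arrays

variable {V : Type*} [Fintype V] (G : SimpleGraph V) (ov : LinearOrder V)
  (oe : LinearOrder (Sym2 V))

noncomputable def initArr (S : Set V) (δ : Cells S) : Cell V :=
  match heightTable G ov oe (δ.1, δ.2.1) with
  | none => Cell.empty
  | some e => if e ∈ (delVerts G S).edgeSet then Cell.edge e else Cell.hole

noncomputable def swapTarget {S : Set V} (B : Cells S → Cell V) (β : Cells S) : Cells S :=
  match heightTable (delVerts G S) ov oe (β.1, β.2.1) with
  | some e => if h : ∃ δ, B δ = Cell.edge e then h.choose else β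
  | none => (critBound B β, β.2)

/-- The arrays `A_β`, with `β` the `k`-th cell of `Z`. -/
noncomputable def stage (S : Set V) [Nonempty {u : V // u ∉ S}] : ℕ → Cells S → Cell V
  | 0 => initArr G ov oe S
  | k + 1 =>
    stage S k ∘ Equiv.swap (cellAt ov S k) (swapTarget G ov oe (stage S k) (cellAt ov S k))

/-- The properties of `A_β` for the `k`-th cell `β`. Row `0`, which is not part of `Z` in the
paper, is empty in both height tables and never receives a hole. -/
structure IsStage {S : Set V} (B : Cells S → Cell V) (k : ℕ) : Prop where
  mem_edgeSet : ∀ δ e, B δ = Cell.edge e → e ∈ (delVerts G S).edgeSet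
  existsUnique : ∀ e ∈ (delVerts G S).edgeSet, ∃! δ, B δ = Cell.edge e
  eq_of_lt : ∀ δ, zidx ov S δ < k → B δ = ofOpt (heightTable (delVerts G S) ov oe (δ.1, δ.2.1))
  eq_of_ge : ∀ δ, k ≤ zidx ov S δ → B δ ≠ Cell.hole →
    B δ = ofOpt (heightTable G ov oe (δ.1, δ.2.1))
  finite_holes : {δ | B δ = Cell.hole}.Finite
  one_le_of_hole : ∀ δ, B δ = Cell.hole → 1 ≤ δ.1

structure IsAdmissibleSwap {S : Set V} (B : Cells S → Cell V) (β δ : Cells S) : Prop where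
  zLE_target : zLE ov β δ
  target_eq : B δ = ofOpt (heightTable (delVerts G S) ov oe (β.1, β.2.1))
  hole_of_ne : δ ≠ β → B β = Cell.hole
  zLE_critBound : zLE ov δ (critBound B β, β.2)
  eq_edge_of_ne : δ.2 ≠ β.2 → B δ = Cell.edge s(β.2.1, δ.2.1)

variable {G ov oe} {S : Set V}

lemma initArr_eq_edge_iff {δ : Cells S} {e : Sym2 V} :
    initArr G ov oe S δ = Cell.edge e ↔
      heightTable G ov oe (δ.1, δ.2.1) = some e ∧ e ∈ (delVerts G S).edgeSet := by
  unfold initArr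
  split <;> (try split_ifs) <;> aesop

lemma initArr_eq_hole_iff {δ : Cells S} :
    initArr G ov oe S δ = Cell.hole ↔
      ∃ e, heightTable G ov oe (δ.1, δ.2.1) = some e ∧ e ∉ (delVerts G S).edgeSet := by
  unfold initArr
  split <;> (try split_ifs) <;> simp_all

lemma initArr_eq_of_ne_hole {δ : Cells S} (h : initArr G ov oe S δ ≠ Cell.hole) :
    initArr G ov oe S δ = ofOpt (heightTable G ov oe (δ.1, δ.2.1)) := by
  unfold initArr at h ⊢
  split <;> (try split_ifs) <;> simp_all [ofOpt]

variable (G ov oe S)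

lemma isStage_initArr : IsStage G ov oe (initArr G ov oe S) 0 where
  mem_edgeSet _ _ h := (initArr_eq_edge_iff.1 h).2
  existsUnique e he := by
    obtain ⟨β, hβ⟩ := exists_heightTable_eq G ov oe ((mem_edgeSet_delVerts G S).1 he).1
    have hβS : β.2 ∉ S := ((mem_edgeSet_delVerts G S).1 he).2 _ (heightTable_spec G ov oe hβ).2
    refine ⟨(β.1, ⟨β.2, hβS⟩), initArr_eq_edge_iff.2 ⟨hβ, he⟩, fun δ hδ => ?_⟩
    exact cells_eq_of_val_eq (eq_of_heightTable_eq G ov oe (initArr_eq_edge_iff.1 hδ).1 hβ)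
  eq_of_lt _ h := absurd h (Nat.not_lt_zero _)
  eq_of_ge _ _ h := initArr_eq_of_ne_hole h
  finite_holes := by
    refine ((Set.finite_Iic (Fintype.card (Sym2 V))).prod Set.finite_univ).subset fun δ h => ?_
    obtain ⟨e, he, -⟩ := initArr_eq_hole_iff.1 h
    exact ⟨(heightTable_row G ov oe he).2, trivial⟩
  one_le_of_hole δ h := by
    obtain ⟨e, he, -⟩ := initArr_eq_hole_iff.1 h
    exact (heightTable_row G ov oe he).1

/-- A hole of column `u` of the initial array holds, in `A`, an edge `uw` with `w ∈ S`, and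
different holes give different `w`. -/
lemma ncard_initArr_holes_le (u : {u : V // u ∉ S}) :
    {i | initArr G ov oe S (i, u) = Cell.hole}.ncard ≤ S.ncard := by
  have hedge : ∀ i ∈ {i | initArr G ov oe S (i, u) = Cell.hole},
      ∃ w ∈ S, heightTable G ov oe (i, u.1) = some s(u.1, w) := by
    intro i hi
    obtain ⟨e, he, heS⟩ := initArr_eq_hole_iff.1 hi
    obtain ⟨heG, hue⟩ := heightTable_spec G ov oe he
    obtain ⟨w, hwe, hwS⟩ : ∃ w ∈ e, w ∈ S := by
      by_contra! h
      exact heS ((mem_edgeSet_delVerts G S).2 ⟨heG, h⟩)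
    have huw : u.1 ≠ w := fun h => u.2 (h ▸ hwS)
    exact ⟨w, hwS, he.trans (congrArg some ((Sym2.mem_and_mem_iff huw).1 ⟨hue, hwe⟩))⟩
  have : Nonempty V := ⟨u.1⟩
  choose! f hfS hf using hedge
  refine Set.ncard_le_ncard_of_injOn f hfS (fun i hi j hj hij => ?_) S.toFinite
  have := eq_of_heightTable_eq G ov oe (hf i hi) (hij ▸ hf j hj)
  exact congrArg Prod.fst this

variable {G ov oe S}

namespace IsStage

variable {B : Cells S → Cell V} {k : ℕ} {β δ : Cells S}

lemma heightTable_eq (hB : IsStage G ov oe B k) {e : Sym2 V} (hδ : B δ = Cell.edge e)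
    (hk : k ≤ zidx ov S δ) : heightTable G ov oe (δ.1, δ.2.1) = some e := by
  have := hB.eq_of_ge δ hk (by simp [hδ])
  rw [hδ] at this
  exact ofOpt_eq_edge_iff.1 this.symm

lemma not_placed_before (hB : IsStage G ov oe B k) (hβ : zidx ov S β = k) {e : Sym2 V}
    (hδ : B δ = Cell.edge e) (hk : k ≤ zidx ov S δ) :
    ∀ c, cellLT ov c (β.1, β.2.1) → heightTable (delVerts G S) ov oe c ≠ some e := by
  rintro ⟨i, w⟩ hc hce
  by_cases hw : w ∈ S
  · rw [heightTable_delVerts_of_mem G S ov oe hw] at hce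
    cases hce
  have hlt : zidx ov S (i, ⟨w, hw⟩) < k := hβ ▸ zidx_lt_zidx ov hc
  have hBc : B (i, ⟨w, hw⟩) = Cell.edge e := by
    rw [hB.eq_of_lt _ hlt]
    exact ofOpt_eq_edge_iff.2 hce
  rw [(hB.existsUnique e (hB.mem_edgeSet δ e hδ)).unique hBc hδ] at hlt
  omega

lemma exists_heightTable_ge (hB : IsStage G ov oe B k) (hβ : zidx ov S β = k) (h1 : 1 ≤ β.1)
    {f : Sym2 V} (hδ : B δ = Cell.edge f) (hk : k ≤ zidx ov S δ) (hf : β.2.1 ∈ f) :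
    ∃ e, heightTable (delVerts G S) ov oe (β.1, β.2.1) = some e ∧ oe.le f e :=
  AltitudePaper.exists_heightTable_ge (delVerts G S) ov oe h1 (hB.mem_edgeSet δ f hδ) hf
    (hB.not_placed_before hβ hδ hk)

lemma zLE_of_heightTable_eq (hB : IsStage G ov oe B k) (hβ : zidx ov S β = k) {e : Sym2 V}
    (he : heightTable (delVerts G S) ov oe (β.1, β.2.1) = some e) (hδ : B δ = Cell.edge e) :
    zLE ov β δ := by
  rcases zLT_trichotomy ov δ β with hlt | rfl | hlt
  · have hδ' := hB.eq_of_lt δ (hβ ▸ zidx_lt_zidx ov hlt)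
    rw [hδ] at hδ'
    have := cells_eq_of_val_eq (eq_of_heightTable_eq _ ov oe (ofOpt_eq_edge_iff.1 hδ'.symm) he)
    exact absurd (this ▸ hlt) (zLT_irrefl ov δ)
  · exact Or.inr rfl
  · exact Or.inl hlt

lemma hole_of_zLT (hB : IsStage G ov oe B k) (hβ : zidx ov S β = k) {e : Sym2 V}
    (he : heightTable (delVerts G S) ov oe (β.1, β.2.1) = some e) (hδ : B δ = Cell.edge e)
    {c : Cells S} (hβc : zLE ov β c) (hc : c.2 = β.2) (hcδ : zLT ov c δ) : B c = Cell.hole := by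
  by_contra hne
  have hkc : k ≤ zidx ov S c := hβ ▸ (zLE_iff_zidx_le ov).1 hβc
  have hkδ : k ≤ zidx ov S δ := hkc.trans (zidx_lt_zidx ov hcδ).le
  have h1 : 1 ≤ c.1 := (heightTable_row _ ov oe he).1.trans (row_le_of_zLE ov hβc)
  have hce : c.2.1 ∈ e := hc ▸ (heightTable_spec _ ov oe he).2
  obtain ⟨f, hf, hef⟩ :=
    exists_heightTable_gt G ov oe h1 (cellLT_of_zLT ov hcδ) (hB.heightTable_eq hδ hkδ) hce
  have hBc : B c = Cell.edge f := by rw [hB.eq_of_ge c hkc hne, hf]; rfl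
  obtain ⟨e', he', hfe'⟩ := hB.exists_heightTable_ge hβ (heightTable_row _ ov oe he).1 hBc hkc
    (hc ▸ (heightTable_spec G ov oe hf).2)
  rw [he, Option.some_inj] at he'
  exact (@not_le_of_gt _ oe.toPreorder _ _ hef) (he' ▸ hfe')

lemma isAdmissibleSwap_of_some (hB : IsStage G ov oe B k) (hβ : zidx ov S β = k) {e : Sym2 V}
    (he : heightTable (delVerts G S) ov oe (β.1, β.2.1) = some e) :
    IsAdmissibleSwap G ov oe B β (swapTarget G ov oe B β) := by
  have hex : ∃ δ, B δ = Cell.edge e :=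
    (hB.existsUnique e (heightTable_spec _ ov oe he).1).exists
  have hδ : swapTarget G ov oe B β = hex.choose := by simp only [swapTarget, he, dif_pos hex]
  have hBδ : B hex.choose = Cell.edge e := hex.choose_spec
  rw [hδ]
  generalize hex.choose = δ at hBδ
  have hβδ := hB.zLE_of_heightTable_eq hβ he hBδ
  obtain ⟨hj, hjB⟩ := critBound_spec (β := β) hB.finite_holes
  refine ⟨hβδ, by rw [hBδ, he]; rfl, fun hne => ?_, ?_, fun hne => ?_⟩
  · exact hB.hole_of_zLT hβ he hBδ (Or.inr rfl) rfl (hβδ.resolve_right (Ne.symm hne))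
  · rcases zLT_trichotomy ov δ (critBound B β, β.2) with h | h | h
    · exact Or.inl h
    · exact Or.inr h
    · exact absurd (hB.hole_of_zLT hβ he hBδ (zLE_of_row_le ov hj) rfl h) hjB
  · have hkδ : k ≤ zidx ov S δ := hβ ▸ (zLE_iff_zidx_le ov).1 hβδ
    have hβ' : β.2.1 ≠ δ.2.1 := fun h => hne (Subtype.ext h.symm)
    rw [hBδ, (Sym2.mem_and_mem_iff hβ').1 ⟨(heightTable_spec _ ov oe he).2,
      (heightTable_spec G ov oe (hB.heightTable_eq hBδ hkδ)).2⟩]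

lemma isAdmissibleSwap_of_none (hB : IsStage G ov oe B k) (hβ : zidx ov S β = k)
    (hnone : heightTable (delVerts G S) ov oe (β.1, β.2.1) = none) :
    IsAdmissibleSwap G ov oe B β (swapTarget G ov oe B β) := by
  have hδ : swapTarget G ov oe B β = (critBound B β, β.2) := by simp only [swapTarget, hnone]
  rw [hδ]
  obtain ⟨hj, hjB⟩ := critBound_spec (β := β) hB.finite_holes
  have hβδ := zLE_of_row_le ov hj
  have hkj : k ≤ zidx ov S (critBound B β, β.2) := hβ ▸ (zLE_iff_zidx_le ov).1 hβδ
  refine ⟨hβδ, ?_, fun hne => ?_, Or.inr rfl, fun hne => absurd rfl hne⟩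
  · rw [hB.eq_of_ge _ hkj hjB, hnone]
    cases hA : heightTable G ov oe (critBound B β, β.2.1) with
    | none => rfl
    | some g =>
      have hj1 : 1 ≤ critBound B β := (heightTable_row G ov oe hA).1
      have h1 : 1 ≤ β.1 := by
        by_contra! h0
        have hβB : B (β.1, β.2) ≠ Cell.hole := fun h => by
          have := hB.one_le_of_hole _ h
          omega
        have := critBound_le le_rfl hβB
        omega
      have hBg : B (critBound B β, β.2) = Cell.edge g := by
        rw [hB.eq_of_ge _ hkj hjB, hA]; rfl
      obtain ⟨e, he, -⟩ := hB.exists_heightTable_ge hβ h1 hBg hkj (heightTable_spec G ov oe hA).2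
      rw [hnone] at he
      cases he
  · have hlt : β.1 < critBound B β :=
      hj.lt_of_ne fun h => hne (Prod.ext h.symm rfl)
    exact hole_of_lt_critBound le_rfl hlt

lemma isAdmissibleSwap_swapTarget (hB : IsStage G ov oe B k) (hβ : zidx ov S β = k) :
    IsAdmissibleSwap G ov oe B β (swapTarget G ov oe B β) := by
  cases he : heightTable (delVerts G S) ov oe (β.1, β.2.1) with
  | none => exact hB.isAdmissibleSwap_of_none hβ he
  | some e => exact hB.isAdmissibleSwap_of_some hβ he

lemma swap (hB : IsStage G ov oe B k) (hβ : zidx ov S β = k)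
    (h : IsAdmissibleSwap G ov oe B β δ) : IsStage G ov oe (B ∘ Equiv.swap β δ) (k + 1) where
  mem_edgeSet _ e hε := hB.mem_edgeSet _ e hε
  existsUnique e he := by
    obtain ⟨δ₀, h₀, huniq⟩ := hB.existsUnique e he
    refine ⟨Equiv.swap β δ δ₀, by simp [h₀], fun ε hε => ?_⟩
    rw [← huniq _ hε, Equiv.swap_apply_self]
  eq_of_lt ε hε := by
    have hkδ : k ≤ zidx ov S δ := hβ ▸ (zLE_iff_zidx_le ov).1 h.zLE_target
    rcases Nat.lt_succ_iff_lt_or_eq.1 hε with hlt | heq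
    · have hεβ : ε ≠ β := by rintro rfl; omega
      have hεδ : ε ≠ δ := by rintro rfl; omega
      rw [Function.comp_apply, Equiv.swap_apply_of_ne_of_ne hεβ hεδ]
      exact hB.eq_of_lt ε hlt
    · obtain rfl : ε = β := zidx_injective ov (heq.trans hβ.symm)
      rw [Function.comp_apply, Equiv.swap_apply_left]
      exact h.target_eq
  eq_of_ge ε hε hne := by
    have hεβ : ε ≠ β := by rintro rfl; omega
    by_cases hεδ : ε = δ
    · subst hεδ
      rw [Function.comp_apply, Equiv.swap_apply_right] at hne
      exact absurd (h.hole_of_ne hεβ) hne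
    rw [Function.comp_apply, Equiv.swap_apply_of_ne_of_ne hεβ hεδ] at hne ⊢
    exact hB.eq_of_ge ε (by omega) hne
  finite_holes := hB.finite_holes.preimage (Equiv.injective _).injOn
  one_le_of_hole ε hε := by
    rw [Function.comp_apply] at hε
    by_cases hεβ : ε = β
    · rw [hεβ, Equiv.swap_apply_left, h.target_eq] at hε
      exact absurd hε (ofOpt_ne_hole _)
    by_cases hεδ : ε = δ
    · rw [hεδ, Equiv.swap_apply_right] at hε
      exact (hB.one_le_of_hole β hε).trans (hεδ ▸ row_le_of_zLE ov h.zLE_target)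
    rw [Equiv.swap_apply_of_ne_of_ne hεβ hεδ] at hε
    exact hB.one_le_of_hole ε hε

end IsStage

variable (G ov oe S) [Nonempty {u : V // u ∉ S}]

lemma isStage_stage : ∀ k, IsStage G ov oe (stage G ov oe S k) k
  | 0 => isStage_initArr G ov oe S
  | k + 1 => (isStage_stage k).swap (zidx_cellAt ov k)
      ((isStage_stage k).isAdmissibleSwap_swapTarget (zidx_cellAt ov k))

lemma stage_zidx_succ (β : Cells S) :
    stage G ov oe S (zidx ov S β + 1) =
      stage G ov oe S (zidx ov S β) ∘
        Equiv.swap β (swapTarget G ov oe (stage G ov oe S (zidx ov S β)) β) := by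
  rw [stage, cellAt_zidx]

end Arrays

theorem exists_transition_arrays_general {V : Type*} [Fintype V] (G : SimpleGraph V)
    (ov : LinearOrder V) (oe : LinearOrder (Sym2 V)) (S : Set V) (s : ℕ) (hS : S.ncard = s) :
    ∃ Af : (ℕ × {u : V // u ∉ S}) → (ℕ × {u : V // u ∉ S}) → Cell V,
      -- every cell is empty, a hole, or contains an edge of G′
      (∀ β δ e, Af β δ = Cell.edge e → e ∈ (delVerts G S).edgeSet) ∧
      -- each edge of G′ appears in exactly one cell of each array
      (∀ β, ∀ e ∈ (delVerts G S).edgeSet, ∃! δ, Af β δ = Cell.edge e) ∧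
      -- each column of the initial array contains at most s holes
      (∀ α, (∀ δ, zLE ov α δ) →
        ∀ u : {u : V // u ∉ S}, {i : ℕ | Af α (i, u) = Cell.hole}.ncard ≤ s) ∧
      ∀ β : ℕ × {u : V // u ∉ S},
        -- (1): below β, A_β agrees with the height table A′ of G′
        (∀ δ, zLT ov δ β → Af β δ =
          ofOpt (heightTable (delVerts G S) ov oe (δ.1, δ.2.val))) ∧
        -- (2): at and above β, non-hole cells of A_β agree with A
        (∀ δ, zLE ov β δ → Af β δ ≠ Cell.hole →
          Af β δ = ofOpt (heightTable G ov oe (δ.1, δ.2.val))) ∧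
        -- (3): the successor array is obtained by a swap inside the critical interval
        (∀ γ, IsSuccZ ov β γ → ∃ j, IsCritBound Af β j ∧
          ∃ δ, zLE ov β δ ∧ zLE ov δ (j, β.2) ∧
            (Af γ β = Af β δ ∧ Af γ δ = Af β β ∧
              ∀ ε, ε ≠ β → ε ≠ δ → Af γ ε = Af β ε) ∧
            (δ.2 ≠ β.2 → Af β δ = Cell.edge s(β.2.val, δ.2.val))) := by
  refine ⟨fun β => have : Nonempty {u : V // u ∉ S} := ⟨β.2⟩; stage G ov oe S (zidx ov S β),
    fun β => ?_, fun β => ?_, fun α hα u => ?_, fun β => ?_⟩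
  · have : Nonempty {u : V // u ∉ S} := ⟨β.2⟩
    exact (isStage_stage G ov oe S _).mem_edgeSet
  · have : Nonempty {u : V // u ∉ S} := ⟨β.2⟩
    exact (isStage_stage G ov oe S _).existsUnique
  · have : Nonempty {u : V // u ∉ S} := ⟨u⟩
    simpa [zidx_eq_zero_of_forall_zLE ov hα, stage, hS] using ncard_initArr_holes_le G ov oe S u
  have : Nonempty {u : V // u ∉ S} := ⟨β.2⟩
  have hB := isStage_stage G ov oe S (zidx ov S β)
  have hswap := hB.isAdmissibleSwap_swapTarget rfl
  refine ⟨fun δ hδ => hB.eq_of_lt δ ((zLT_iff_zidx_lt ov).1 hδ),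
    fun δ hδ => hB.eq_of_ge δ ((zLE_iff_zidx_le ov).1 hδ), fun γ hγ => ?_⟩
  simp only [zidx_of_isSuccZ ov hγ, stage_zidx_succ, Function.comp_apply]
  exact ⟨_, isCritBound_critBound hB.finite_holes, _, hswap.zLE_target, hswap.zLE_critBound,
    ⟨congrArg _ (Equiv.swap_apply_left ..), congrArg _ (Equiv.swap_apply_right ..), fun ε hβ hδ =>
      congrArg _ (Equiv.swap_apply_of_ne_of_ne hβ hδ)⟩, hswap.eq_edge_of_ne⟩

/-- Lemma `stdtbl` of the paper.  Let `G` be an `n`-vertex totally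
ordered graph, `S` a set of `s` vertices with `s ≤ n − 2`, `G′ = G − S` (inheriting
the orders), `A` the array obtained from the height table of `G` by deleting the
columns indexed by `S`, and `A′` the height table of `G′`.  Then there is a family of
arrays `{A_β : β ∈ Z}`, `Z = {1,2,…} × V(G′)`, each cell being empty, an edge of
`G′`, or a hole, each edge of `G′` appearing in exactly one cell of each array, the
initial array having at most `s` holes in each column, and satisfying properties
(1)–(3). -/
theorem exists_transition_arrays {V : Type*} [Fintype V] (G : SimpleGraph V)
    (ov : LinearOrder V) (oe : LinearOrder (Sym2 V)) (n : ℕ)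
    (hn : Fintype.card V = n) (S : Set V) (s : ℕ) (hS : S.ncard = s)
    (hsn : s + 2 ≤ n) :
    ∃ Af : (ℕ × {u : V // u ∉ S}) → (ℕ × {u : V // u ∉ S}) → Cell V,
      -- every cell is empty, a hole, or contains an edge of G′
      (∀ β δ e, Af β δ = Cell.edge e → e ∈ (delVerts G S).edgeSet) ∧
      -- each edge of G′ appears in exactly one cell of each array
      (∀ β, ∀ e ∈ (delVerts G S).edgeSet, ∃! δ, Af β δ = Cell.edge e) ∧
      -- each column of the initial array contains at most s holes
      (∀ α, (∀ δ, zLE ov α δ) →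
        ∀ u : {u : V // u ∉ S}, {i : ℕ | Af α (i, u) = Cell.hole}.ncard ≤ s) ∧
      ∀ β : ℕ × {u : V // u ∉ S},
        -- (1): below β, A_β agrees with the height table A′ of G′
        (∀ δ, zLT ov δ β → Af β δ =
          ofOpt (heightTable (delVerts G S) ov oe (δ.1, δ.2.val))) ∧
        -- (2): at and above β, non-hole cells of A_β agree with A
        (∀ δ, zLE ov β δ → Af β δ ≠ Cell.hole →
          Af β δ = ofOpt (heightTable G ov oe (δ.1, δ.2.val))) ∧
        -- (3): the successor array is obtained by a swap inside the critical interval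
        (∀ γ, IsSuccZ ov β γ → ∃ j, IsCritBound Af β j ∧
          ∃ δ, zLE ov β δ ∧ zLE ov δ (j, β.2) ∧
            (Af γ β = Af β δ ∧ Af γ δ = Af β β ∧
              ∀ ε, ε ≠ β → ε ≠ δ → Af γ ε = Af β ε) ∧
            (δ.2 ≠ β.2 → Af β δ = Cell.edge s(β.2.val, δ.2.val))) :=
  exists_transition_arrays_general G ov oe S s hS

end AltitudePaper
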